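/- Let n = 2r be an even positive integer. Then the ℂ-vector space of functions ZMod n → ℂ is the internal direct sum of the line ℂ·f_0, the line ℂ·f_r, and the subspaces V_s for 1 ≤ s ≤ r − 1; each V_s is two-dimensional and invariant under every λ_t, and the lines ℂ·f_0 and ℂ·f_r are fixed pointwise by every λ_t. -/
import Mathlib


/-- The regular representation of the dihedral quandle `R_n = Quandle.dihedral n`
(`ZMod n` with `x ◃ y = 2y - x`) on functions `ZMod n → ℂ`:
`(λ_t f)(x) = f (2t - x)`. -/
def lam (n : ℕ) (t : ZMod n) (f : ZMod n → ℂ) : ZMod n → ℂ :=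
  fun x => f (2 * t - x)

/-- `ω = exp(2πi/n)`. -/
noncomputable def dihedralOmega (n : ℕ) : ℂ :=
  Complex.exp (2 * Real.pi * Complex.I / n)

/-- The character `f_s : ZMod n → ℂ`, `f_s(x) = ω^{s·x.val}`. -/
noncomputable def chi (n : ℕ) (s : ℤ) : ZMod n → ℂ :=
  fun x => dihedralOmega n ^ (s * (x.val : ℤ))

/-- `V_s`: the `ℂ`-linear span of `{f_s, f_{-s}}` in `ZMod n → ℂ`. -/
noncomputable def Vsub (n : ℕ) (s : ℤ) : Submodule ℂ (ZMod n → ℂ) :=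
  Submodule.span ℂ {chi n s, chi n (-s)}

namespace DihedralAux

variable {n : ℕ}

lemma omega_ne_zero (n : ℕ) : dihedralOmega n ≠ 0 := Complex.exp_ne_zero _

lemma omega_prim (hn : n ≠ 0) : IsPrimitiveRoot (dihedralOmega n) n :=
  Complex.isPrimitiveRoot_exp n hn

lemma omega_pow_n (hn : n ≠ 0) : dihedralOmega n ^ (n : ℤ) = 1 := by
  rw [zpow_natCast]; exact (omega_prim hn).pow_eq_one

lemma omega_zpow_congr (hn : n ≠ 0) {a b : ℤ} (h : a ≡ b [ZMOD (n : ℤ)]) :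
    dihedralOmega n ^ a = dihedralOmega n ^ b := by
  obtain ⟨k, hk⟩ := h.dvd
  have hb : b = a + (n : ℤ) * k := by omega
  rw [hb, zpow_add₀ (omega_ne_zero n), zpow_mul, omega_pow_n hn, one_zpow, mul_one]

lemma chi_congr (hn : n ≠ 0) {a b : ℤ} (h : (a : ZMod n) = (b : ZMod n)) :
    chi n a = chi n b := by
  funext x
  exact omega_zpow_congr hn (((ZMod.intCast_eq_intCast_iff a b n).mp h).mul_right _)

noncomputable def F (n : ℕ) : ZMod n → (ZMod n → ℂ) := fun s => chi n (s.val : ℤ)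

lemma chi_eq_F [NeZero n] (s : ℤ) : chi n s = F n ((s : ZMod n)) := by
  apply chi_congr (NeZero.ne n)
  simp [ZMod.natCast_val, ZMod.intCast_cast, ZMod.cast_id]

lemma val_sub_modeq [NeZero n] (t x : ZMod n) :
    (((2 * t - x).val : ℤ)) ≡ 2 * (t.val : ℤ) - (x.val : ℤ) [ZMOD (n : ℤ)] := by
  rw [← ZMod.intCast_eq_intCast_iff]
  push_cast [ZMod.natCast_val, ZMod.cast_id]
  ring

lemma lam_chi [NeZero n] (t : ZMod n) (s : ℤ) :
    lam n t (chi n s) = (dihedralOmega n ^ (2 * s * (t.val : ℤ))) • chi n (-s) := by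
  funext x
  show dihedralOmega n ^ (s * ((2 * t - x).val : ℤ)) = _
  have h := (val_sub_modeq t x).mul_left s
  rw [Pi.smul_apply, smul_eq_mul]
  show _ = _ * dihedralOmega n ^ ((-s) * (x.val : ℤ))
  rw [omega_zpow_congr (NeZero.ne n) h, ← zpow_add₀ (omega_ne_zero n)]
  congr 1
  ring

def lamL (n : ℕ) (t : ZMod n) : (ZMod n → ℂ) →ₗ[ℂ] (ZMod n → ℂ) where
  toFun := lam n t
  map_add' _ _ := rfl
  map_smul' _ _ := rfl

lemma vsub_invariant [NeZero n] (s : ℤ) (t : ZMod n) :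
    ∀ f ∈ Vsub n s, lam n t f ∈ Vsub n s := by
  intro f hf
  have hmap : Submodule.map (lamL n t) (Vsub n s) ≤ Vsub n s := by
    rw [Vsub, Submodule.map_span, Set.image_insert_eq, Set.image_singleton]
    rw [Submodule.span_le]
    rintro g (rfl | rfl)
    · show lam n t (chi n s) ∈ Vsub n s
      rw [lam_chi]
      exact Submodule.smul_mem _ _ (Submodule.subset_span (by simp))
    · show lam n t (chi n (-s)) ∈ Vsub n s
      rw [lam_chi, neg_neg]
      exact Submodule.smul_mem _ _ (Submodule.subset_span (by simp))
  exact hmap ⟨f, hf, rfl⟩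

lemma lam_chi_zero [NeZero n] (t : ZMod n) : lam n t (chi n 0) = chi n 0 := by
  funext x; simp [lam, chi]

lemma lam_chi_r {r : ℕ} (hn : n = 2 * r) [NeZero n] (t : ZMod n) :
    lam n t (chi n (r : ℤ)) = chi n (r : ℤ) := by
  rw [lam_chi]
  have h1 : dihedralOmega n ^ (2 * (r : ℤ) * (t.val : ℤ)) = 1 := by
    have h : 2 * (r : ℤ) * (t.val : ℤ) = (n : ℤ) * (t.val : ℤ) := by
      subst hn; push_cast; ring
    rw [h, zpow_mul, omega_pow_n (NeZero.ne n), one_zpow]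
  have h2 : chi n (-(r : ℤ)) = chi n (r : ℤ) := by
    apply chi_congr (NeZero.ne n)
    have : ((r : ℤ) : ZMod n) + ((r : ℤ) : ZMod n) = ((n : ℤ) : ZMod n) := by
      subst hn; push_cast; ring
    simp only [Int.cast_neg]
    rw [neg_eq_iff_add_eq_zero, this]
    simp
  rw [h1, h2, one_smul]

lemma F_li (hn1 : 1 < n) [NeZero n] : LinearIndependent ℂ (F n) := by
  have hω := omega_prim (by omega : n ≠ 0)
  have hpow : ∀ s : ZMod n, (dihedralOmega n ^ (s.val : ℤ)) ^ n = 1 := fun s => by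
    rw [← zpow_natCast, ← zpow_mul, mul_comm, zpow_mul, omega_pow_n (NeZero.ne n), one_zpow]
  let g : ZMod n → AddChar (ZMod n) ℂ := fun s => AddChar.zmodChar n (hpow s)
  have hg : Function.Injective g := by
    intro a b hab
    haveI : Fact (1 < n) := ⟨hn1⟩
    have h1 := congrArg (fun ψ : AddChar (ZMod n) ℂ => ψ (1 : ZMod n)) hab
    simp only [g, AddChar.zmodChar_apply, ZMod.val_one, pow_one] at h1
    have h2 : dihedralOmega n ^ a.val = dihedralOmega n ^ b.val := by
      rw [← zpow_natCast, ← zpow_natCast]; exact h1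
    have := hω.pow_inj a.val_lt b.val_lt h2
    exact ZMod.val_injective n this
  have key : (DFunLike.coe ∘ g) = F n := by
    funext s x
    simp only [Function.comp_apply, g, AddChar.zmodChar_apply, F, chi]
    rw [← zpow_natCast (dihedralOmega n ^ ((s.val : ℤ))), ← zpow_mul]
  have := (AddChar.linearIndependent (ZMod n) ℂ).comp g hg
  rwa [key] at this

lemma F_span (hn1 : 1 < n) [NeZero n] : Submodule.span ℂ (Set.range (F n)) = ⊤ := by
  have hcard : Fintype.card (ZMod n) = Module.finrank ℂ (ZMod n → ℂ) := by
    simp [Module.finrank_fintype_fun_eq_card]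
  have hb := (basisOfLinearIndependentOfCardEqFinrank (F_li hn1) hcard).span_eq
  rwa [coe_basisOfLinearIndependentOfCardEqFinrank] at hb

end DihedralAux

open DihedralAux in
/-- For even `n = 2r > 0`, the space of functions `ZMod n → ℂ` is the internal
direct sum of the line `ℂ·f_0`, the line `ℂ·f_r`, and the subspaces `V_s` for
`1 ≤ s ≤ r - 1`; each such `V_s` is two-dimensional and invariant under every
`λ_t`, and the lines `ℂ·f_0` and `ℂ·f_r` are fixed pointwise by every `λ_t`. -/
theorem regular_decomposition_even (n r : ℕ) (hn : n = 2 * r) (hpos : 0 < n) :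
    DirectSum.IsInternal (fun i : Fin (r + 1) =>
      if (i : ℕ) = 0 then (ℂ ∙ chi n 0)
      else if (i : ℕ) = r then (ℂ ∙ chi n (r : ℤ))
      else Vsub n (i : ℕ)) ∧
    (∀ s : ℤ, 1 ≤ s → s ≤ (r : ℤ) - 1 → Module.finrank ℂ (Vsub n s) = 2) ∧
    (∀ s : ℤ, 1 ≤ s → s ≤ (r : ℤ) - 1 →
      ∀ t : ZMod n, ∀ f ∈ Vsub n s, lam n t f ∈ Vsub n s) ∧
    (∀ t : ZMod n, ∀ f ∈ (ℂ ∙ chi n 0), lam n t f = f) ∧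
    (∀ t : ZMod n, ∀ f ∈ (ℂ ∙ chi n (r : ℤ)), lam n t f = f) := by
  have hr1 : 1 ≤ r := by omega
  have hn2 : 1 < n := by omega
  haveI : NeZero n := ⟨by omega⟩
  set N : Fin (r + 1) → Submodule ℂ (ZMod n → ℂ) := fun i =>
    if (i : ℕ) = 0 then (ℂ ∙ chi n 0)
    else if (i : ℕ) = r then (ℂ ∙ chi n (r : ℤ))
    else Vsub n (i : ℕ) with hNdef
  set S : Fin (r + 1) → Set (ZMod n) := fun i =>
    if (i : ℕ) = 0 then {0}
    else if (i : ℕ) = r then {((r : ℕ) : ZMod n)}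
    else {((i : ℕ) : ZMod n), -((i : ℕ) : ZMod n)} with hSdef
  have h0F : chi n 0 = F n 0 := by simpa using chi_eq_F (n := n) 0
  have hrF : chi n (r : ℤ) = F n ((r : ℕ) : ZMod n) := by
    simpa using chi_eq_F (n := n) ((r : ℕ) : ℤ)
  have hiF : ∀ i : ℕ, chi n (i : ℤ) = F n ((i : ℕ) : ZMod n) := fun i => by
    simpa using chi_eq_F (n := n) ((i : ℕ) : ℤ)
  have hiF' : ∀ i : ℕ, chi n (-(i : ℤ)) = F n (-((i : ℕ) : ZMod n)) := fun i => by
    simpa using chi_eq_F (n := n) (-(i : ℕ) : ℤ)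
  have hNS : ∀ i, N i = Submodule.span ℂ (F n '' S i) := by
    intro i
    simp only [hNdef, hSdef]
    split_ifs with h0 hr'
    · rw [Set.image_singleton, h0F]
    · rw [Set.image_singleton, hrF]
    · rw [Set.image_insert_eq, Set.image_singleton, Vsub, hiF, hiF']
  have hval : ∀ i : Fin (r + 1), ∀ s ∈ S i,
      (s.val = (i : ℕ) ∨ s.val = n - (i : ℕ)) ∧ (i : ℕ) ≤ r := by
    intro i s hs
    simp only [hSdef] at hs
    split_ifs at hs with h0 hr'
    · rw [Set.mem_singleton_iff] at hs
      subst hs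
      rw [ZMod.val_zero]
      omega
    · rw [Set.mem_singleton_iff] at hs
      subst hs
      rw [ZMod.val_natCast_of_lt (by omega)]
      omega
    · have hilt : (i : ℕ) < r + 1 := i.isLt
      have hv : (((i : ℕ) : ZMod n)).val = (i : ℕ) :=
        ZMod.val_natCast_of_lt (by omega)
      have hne0 : ((i : ℕ) : ZMod n) ≠ 0 := by
        intro h
        have := congrArg ZMod.val h
        rw [hv, ZMod.val_zero] at this
        omega
      rcases hs with rfl | rfl
      · rw [hv]; omega
      · rw [ZMod.neg_val, if_neg hne0, hv]; omega
  have hind : iSupIndep N := by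
    intro i
    rw [hNS]
    have hsup : (⨆ j, ⨆ _ : j ≠ i, N j) ≤
        Submodule.span ℂ (F n '' ⋃ j, ⋃ _ : j ≠ i, S j) := by
      refine iSup₂_le fun j hj => ?_
      rw [hNS]
      exact Submodule.span_mono (Set.image_mono (Set.subset_biUnion_of_mem hj))
    refine ((F_li hn2).disjoint_span_image ?_).mono_right hsup
    rw [Set.disjoint_left]
    intro s hsi hsj
    simp only [Set.mem_iUnion] at hsj
    obtain ⟨j, hj, hsj⟩ := hsj
    obtain ⟨hd1, hb1⟩ := hval i s hsi
    obtain ⟨hd2, hb2⟩ := hval j s hsj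
    refine hj (Fin.ext ?_)
    rcases hd1 with h | h <;> rcases hd2 with h' | h' <;> omega
  have hmemS : ∀ (i : Fin (r + 1)) (s : ZMod n), s ∈ S i → F n s ∈ N i := fun i s hs =>
    (hNS i) ▸ Submodule.subset_span (Set.mem_image_of_mem _ hs)
  have hSmk : ∀ (v : ℕ) (hv : v < r + 1), S ⟨v, hv⟩ =
      if v = 0 then ({0} : Set (ZMod n))
      else if v = r then {((r : ℕ) : ZMod n)}
      else {((v : ℕ) : ZMod n), -((v : ℕ) : ZMod n)} := fun v hv => rfl
  have htop : (⨆ i, N i) = ⊤ := by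
    rw [eq_top_iff, ← F_span hn2, Submodule.span_le]
    rintro _ ⟨s, rfl⟩
    have hvlt := ZMod.val_lt s
    refine SetLike.mem_coe.mpr ?_
    have hsv : s = ((s.val : ℕ) : ZMod n) := by rw [ZMod.natCast_val, ZMod.cast_id]
    by_cases h0 : s.val = 0
    · refine Submodule.mem_iSup_of_mem ⟨0, by omega⟩ (hmemS _ _ ?_)
      rw [hSmk, if_pos rfl, Set.mem_singleton_iff, ← ZMod.val_eq_zero]
      exact h0
    · by_cases hR : s.val = r
      · refine Submodule.mem_iSup_of_mem ⟨r, by omega⟩ (hmemS _ _ ?_)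
        rw [hSmk, if_neg (by omega : ¬ r = 0), if_pos rfl, Set.mem_singleton_iff]
        rw [hsv, hR]
      · by_cases hlt : s.val < r
        · refine Submodule.mem_iSup_of_mem ⟨s.val, by omega⟩ (hmemS _ _ ?_)
          rw [hSmk, if_neg h0, if_neg hR]
          exact Set.mem_insert_iff.mpr (Or.inl hsv)
        · -- s.val > r
          refine Submodule.mem_iSup_of_mem ⟨n - s.val, by omega⟩ (hmemS _ _ ?_)
          rw [hSmk, if_neg (by omega : ¬ (n - s.val) = 0),
            if_neg (by omega : ¬ (n - s.val) = r)]
          refine Set.mem_insert_iff.mpr (Or.inr ?_)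
          show s = -((n - s.val : ℕ) : ZMod n)
          have h1 : ((n - s.val : ℕ) : ZMod n) + s = 0 := by
            have : ((n - s.val : ℕ) : ZMod n) + ((s.val : ℕ) : ZMod n)
                = ((n : ℕ) : ZMod n) := by
              rw [← Nat.cast_add]
              congr 1
              omega
            rwa [ZMod.natCast_val, ZMod.cast_id, ZMod.natCast_self] at this
          rw [eq_neg_iff_add_eq_zero, add_comm]
          exact h1
  have hInternal : DirectSum.IsInternal N :=
    (DirectSum.isInternal_submodule_iff_iSupIndep_and_iSup_eq_top N).mpr ⟨hind, htop⟩
  refine ⟨hInternal, ?_, fun s _ _ t f hf => vsub_invariant s t f hf, ?_, ?_⟩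
  · -- finrank
    intro s hs1 hs2
    have ha : ((s : ZMod n)) ≠ -((s : ZMod n)) := by
      intro h
      have h2 : ((2 * s : ℤ) : ZMod n) = 0 := by
        push_cast
        rw [two_mul]
        exact eq_neg_iff_add_eq_zero.mp h
      rw [ZMod.intCast_zmod_eq_zero_iff_dvd] at h2
      have := Int.le_of_dvd (by omega) h2
      omega
    have hinj : Function.Injective ![(s : ZMod n), -(s : ZMod n)] := by
      intro a b hab
      fin_cases a <;> fin_cases b <;> simp_all
    have hli2 := (F_li hn2).comp _ hinj
    have hVs : Vsub n s
        = Submodule.span ℂ (Set.range (F n ∘ ![(s : ZMod n), -(s : ZMod n)])) := by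
      rw [Vsub]
      congr 1
      have h1 : chi n s = F n ((s : ZMod n)) := chi_eq_F s
      have h2 : chi n (-s) = F n (-((s : ZMod n))) := by simpa using chi_eq_F (n := n) (-s)
      rw [Set.range_comp,
        (show Set.range ![(s : ZMod n), -(s : ZMod n)] = {(s : ZMod n), -(s : ZMod n)} from by
          ext z; simp [Fin.exists_fin_two, or_comm]),
        Set.image_insert_eq, Set.image_singleton, h1, h2]
    rw [hVs, finrank_span_eq_card hli2]
    simp
  · intro t f hf
    obtain ⟨c, rfl⟩ := Submodule.mem_span_singleton.mp hf
    show lam n t (c • chi n 0) = c • chi n 0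
    have hsm : lam n t (c • chi n 0) = c • lam n t (chi n 0) := rfl
    rw [hsm, lam_chi_zero]
  · intro t f hf
    obtain ⟨c, rfl⟩ := Submodule.mem_span_singleton.mp hf
    show lam n t (c • chi n (r : ℤ)) = c • chi n (r : ℤ)
    have hsm : lam n t (c • chi n (r : ℤ)) = c • lam n t (chi n (r : ℤ)) := rfl
    rw [hsm, lam_chi_r hn]
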